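/- For the edgeless cube Q_L, illegality is persistent: if f_0 is an illegal configuration (i.e., f_0(c) = NaC for some cell c) and ⟨σ_η : η < θ⟩ is any basic sequence, then the terminal configuration obtained by applying the sequence to f_0 is illegal. Consequently no legal configuration is accessible from an illegal one in any ordinal number of moves. -/

import Mathlib

universe u v

namespace InfRubik

/-- The three axes of the cube. -/
inductive Axis : Type
  | x | y | z
  deriving DecidableEq

/-- The six colors of the Rubik's cube.  A *configuration* is a map from cells to
`Option Color`, where `none` plays the role of the non-color `NaC`. -/
inductive Color : Type
  | red | white | green | orange | yellow | blue
  deriving DecidableEq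

/-- The set `L̄† = -L ∪ {0} ∪ L ∪ {±∞}` of extended coordinates. -/
inductive ExtCoord (L : Type u) : Type u
  | neg : L → ExtCoord L
  | zero : ExtCoord L
  | pos : L → ExtCoord L
  | negInf : ExtCoord L
  | posInf : ExtCoord L

namespace ExtCoord

variable {L : Type u}

/-- The reflection `r ↦ -r`. -/
def reflect : ExtCoord L → ExtCoord L
  | .neg r => .pos r
  | .zero => .zero
  | .pos r => .neg r
  | .negInf => .posInf
  | .posInf => .negInf

@[simp] theorem reflect_reflect (a : ExtCoord L) : a.reflect.reflect = a := by
  cases a <;> rfl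

/-- Whether a coordinate is `±∞`. -/
def isInfB : ExtCoord L → Bool
  | .negInf => true
  | .posInf => true
  | _ => false

@[simp] theorem isInfB_reflect (a : ExtCoord L) : a.reflect.isInfB = a.isInfB := by
  cases a <;> rfl

/-- Whether a coordinate is `0`. -/
def isZeroB : ExtCoord L → Bool
  | .zero => true
  | _ => false

@[simp] theorem isZeroB_reflect (a : ExtCoord L) : a.reflect.isZeroB = a.isZeroB := by
  cases a <;> rfl

end ExtCoord

/-- A point of the ambient space `L̄† × L̄† × L̄†`. -/
abbrev Triple (L : Type u) := ExtCoord L × ExtCoord L × ExtCoord L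

/-- The coordinate of a point along an axis. -/
def Triple.coord {L : Type u} : Axis → Triple L → ExtCoord L
  | .x, p => p.1
  | .y, p => p.2.1
  | .z, p => p.2.2

/-- Quarter-turn rotation of the ambient space about an axis (right-hand rule). -/
def rot {L : Type u} : Axis → Triple L → Triple L
  | .x, p => (p.1, p.2.2.reflect, p.2.1)
  | .y, p => (p.2.2, p.2.1, p.1.reflect)
  | .z, p => (p.2.1.reflect, p.1, p.2.2)

/-- Inverse quarter-turn rotation of the ambient space about an axis. -/
def rotInv {L : Type u} : Axis → Triple L → Triple L
  | .x, p => (p.1, p.2.2, p.2.1.reflect)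
  | .y, p => (p.2.2.reflect, p.2.1, p.1)
  | .z, p => (p.2.1, p.1.reflect, p.2.2)

@[simp] theorem rotInv_rot {L : Type u} (i : Axis) (p : Triple L) : rotInv i (rot i p) = p := by
  cases i <;> simp [rot, rotInv]

@[simp] theorem rot_rotInv {L : Type u} (i : Axis) (p : Triple L) : rot i (rotInv i p) = p := by
  cases i <;> simp [rot, rotInv]

/-- The number of infinite coordinates of a point. -/
def infCount {L : Type u} (p : Triple L) : ℕ :=
  (if p.1.isInfB then 1 else 0) + (if p.2.1.isInfB then 1 else 0) +
    (if p.2.2.isInfB then 1 else 0)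

/-- The number of zero coordinates of a point. -/
def zeroCount {L : Type u} (p : Triple L) : ℕ :=
  (if p.1.isZeroB then 1 else 0) + (if p.2.1.isZeroB then 1 else 0) +
    (if p.2.2.isZeroB then 1 else 0)

theorem infCount_rot {L : Type u} (i : Axis) (p : Triple L) : infCount (rot i p) = infCount p := by
  rcases p with ⟨a, b, c⟩
  cases i <;> cases a <;> cases b <;> cases c <;> rfl

theorem infCount_rotInv {L : Type u} (i : Axis) (p : Triple L) :
    infCount (rotInv i p) = infCount p := by
  rcases p with ⟨a, b, c⟩
  cases i <;> cases a <;> cases b <;> cases c <;> rfl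

@[simp] theorem coord_rot_self {L : Type u} (i : Axis) (p : Triple L) :
    (rot i p).coord i = p.coord i := by
  cases i <;> rfl

@[simp] theorem coord_rotInv_self {L : Type u} (i : Axis) (p : Triple L) :
    (rotInv i p).coord i = p.coord i := by
  cases i <;> rfl

/-- A cell of the *edgeless* cube `Q_L`: a point of the ambient space with exactly one
infinite coordinate. -/
def Cell (L : Type u) : Type u := {p : Triple L // infCount p = 1}

open Classical in
/-- The underlying map on points of the quarter-turn twist `T_{i,α}`. -/
noncomputable def qtTriple {L : Type u} (i : Axis) (α : ExtCoord L) (p : Triple L) : Triple L :=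
  if p.coord i = α then rot i p else p

open Classical in
/-- The underlying map on points of the inverse quarter-turn twist `T_{i,α}⁻¹`. -/
noncomputable def qtTripleInv {L : Type u} (i : Axis) (α : ExtCoord L) (p : Triple L) : Triple L :=
  if p.coord i = α then rotInv i p else p

theorem qtTripleInv_qtTriple {L : Type u} (i : Axis) (α : ExtCoord L) (p : Triple L) :
    qtTripleInv i α (qtTriple i α p) = p := by
  classical
  by_cases h : p.coord i = α <;> simp [qtTriple, qtTripleInv, h]

theorem qtTriple_qtTripleInv {L : Type u} (i : Axis) (α : ExtCoord L) (p : Triple L) :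
    qtTriple i α (qtTripleInv i α p) = p := by
  classical
  by_cases h : p.coord i = α <;> simp [qtTriple, qtTripleInv, h]

theorem infCount_qtTriple {L : Type u} (i : Axis) (α : ExtCoord L) (p : Triple L) :
    infCount (qtTriple i α p) = infCount p := by
  classical
  by_cases h : p.coord i = α <;> simp [qtTriple, h, infCount_rot]

theorem infCount_qtTripleInv {L : Type u} (i : Axis) (α : ExtCoord L) (p : Triple L) :
    infCount (qtTripleInv i α p) = infCount p := by
  classical
  by_cases h : p.coord i = α <;> simp [qtTripleInv, h, infCount_rotInv]

/-- The quarter-turn twist `T_{i,α}` of the edgeless cube, as a permutation of cells. -/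
noncomputable def quarterTurn {L : Type u} (i : Axis) (α : ExtCoord L) : Equiv.Perm (Cell L) where
  toFun c := ⟨qtTriple i α c.1, by rw [infCount_qtTriple]; exact c.2⟩
  invFun c := ⟨qtTripleInv i α c.1, by rw [infCount_qtTripleInv]; exact c.2⟩
  left_inv c := Subtype.ext (qtTripleInv_qtTriple i α c.1)
  right_inv c := Subtype.ext (qtTriple_qtTripleInv i α c.1)

/-- The basic twists of the edgeless cube: quarter turns, half turns and reverse
quarter turns of a single layer. -/
def IsBasic (L : Type u) (π : Equiv.Perm (Cell L)) : Prop :=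
  ∃ (i : Axis) (α : ExtCoord L),
    π = quarterTurn i α ∨ π = quarterTurn i α ^ 2 ∨ π = (quarterTurn i α)⁻¹

/-! ### The edged cube -/

/-- How a quarter-turn about axis `i` transports the face tag of a cell. -/
def tagMap : Axis → Axis → Axis
  | .x, .x => .x
  | .x, .y => .z
  | .x, .z => .y
  | .y, .x => .z
  | .y, .y => .y
  | .y, .z => .x
  | .z, .x => .y
  | .z, .y => .x
  | .z, .z => .z

@[simp] theorem tagMap_tagMap (i j : Axis) : tagMap i (tagMap i j) = j := by
  cases i <;> cases j <;> rfl

theorem isInfB_coord_tagMap_rot {L : Type u} (i j : Axis) (p : Triple L) :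
    ((rot i p).coord (tagMap i j)).isInfB = (p.coord j).isInfB := by
  cases i <;> cases j <;> simp [rot, Triple.coord, tagMap]

theorem isInfB_coord_tagMap_rotInv {L : Type u} (i j : Axis) (p : Triple L) :
    ((rotInv i p).coord (tagMap i j)).isInfB = (p.coord j).isInfB := by
  cases i <;> cases j <;> simp [rotInv, Triple.coord, tagMap]

/-- A cell of the *edged* cube `Q̄_L`: a point of the ambient space together with a tag
naming an axis, such that the coordinate along the tagged axis is infinite (the tag
indicates the face to which the cell belongs). -/
def ECell (L : Type u) : Type u := {q : Triple L × Axis // (q.1.coord q.2).isInfB = true}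

open Classical in
/-- The underlying map of the quarter-turn twist `T_{i,α}` of the edged cube. -/
noncomputable def eqtFun {L : Type u} (i : Axis) (α : ExtCoord L) (q : Triple L × Axis) :
    Triple L × Axis :=
  if q.1.coord i = α then (rot i q.1, tagMap i q.2) else q

open Classical in
/-- The underlying map of the reverse quarter-turn twist of the edged cube. -/
noncomputable def eqtFunInv {L : Type u} (i : Axis) (α : ExtCoord L) (q : Triple L × Axis) :
    Triple L × Axis :=
  if q.1.coord i = α then (rotInv i q.1, tagMap i q.2) else q

theorem eqtFunInv_eqtFun {L : Type u} (i : Axis) (α : ExtCoord L) (q : Triple L × Axis) :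
    eqtFunInv i α (eqtFun i α q) = q := by
  classical
  by_cases h : q.1.coord i = α <;> simp [eqtFun, eqtFunInv, h]

theorem eqtFun_eqtFunInv {L : Type u} (i : Axis) (α : ExtCoord L) (q : Triple L × Axis) :
    eqtFun i α (eqtFunInv i α q) = q := by
  classical
  by_cases h : q.1.coord i = α <;> simp [eqtFun, eqtFunInv, h]

theorem isInfB_eqtFun {L : Type u} (i : Axis) (α : ExtCoord L) (q : Triple L × Axis) :
    (((eqtFun i α q).1.coord (eqtFun i α q).2)).isInfB = ((q.1.coord q.2)).isInfB := by
  classical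
  by_cases h : q.1.coord i = α <;> simp [eqtFun, h, isInfB_coord_tagMap_rot]

theorem isInfB_eqtFunInv {L : Type u} (i : Axis) (α : ExtCoord L) (q : Triple L × Axis) :
    (((eqtFunInv i α q).1.coord (eqtFunInv i α q).2)).isInfB = ((q.1.coord q.2)).isInfB := by
  classical
  by_cases h : q.1.coord i = α <;> simp [eqtFunInv, h, isInfB_coord_tagMap_rotInv]

/-- The quarter-turn twist `T_{i,α}` of the edged cube, as a permutation of cells.  A face
twist moves, besides the cells of its face, also the coupled edge and corner cells of the
adjacent faces lying in the twisted layer. -/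
noncomputable def equarterTurn {L : Type u} (i : Axis) (α : ExtCoord L) :
    Equiv.Perm (ECell L) where
  toFun c := ⟨eqtFun i α c.1, by rw [isInfB_eqtFun]; exact c.2⟩
  invFun c := ⟨eqtFunInv i α c.1, by rw [isInfB_eqtFunInv]; exact c.2⟩
  left_inv c := Subtype.ext (eqtFunInv_eqtFun i α c.1)
  right_inv c := Subtype.ext (eqtFun_eqtFunInv i α c.1)

/-- The basic twists of the edged cube. -/
def IsEBasic (L : Type u) (π : Equiv.Perm (ECell L)) : Prop :=
  ∃ (i : Axis) (α : ExtCoord L),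
    π = equarterTurn i α ∨ π = equarterTurn i α ^ 2 ∨ π = (equarterTurn i α)⁻¹

/-! ### Transfinite sequences of twists and their action on labellings -/

open Classical in
/-- The eventual value of an ordinal-indexed family of `Option`-values: `some v` if the family
stabilizes on `some v` before `lam`, and `none` otherwise. -/
noncomputable def eventualVal {X : Type u} (lam : Ordinal.{v})
    (g : ∀ η, η < lam → Option X) : Option X :=
  if h : ∃ v : X, ∃ γ, γ < lam ∧ ∀ η (hη : η < lam), γ ≤ η → g η hη = some v
  then some h.choose else none

/-- Applying an ordinal-indexed sequence of permutations to an initial labelling: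
`run σ f0 θ` is the labelling obtained after the first `θ` moves, with
`f_{η+1}(c) = f_η(σ_η⁻¹ c)` at successors and the eventual value (or `NaC = none`)
at limits. -/
noncomputable def run {Cl : Type v} {X : Type u} (σ : Ordinal.{v} → Equiv.Perm Cl)
    (f0 : Cl → Option X) (θ : Ordinal.{v}) : Cl → Option X :=
  Ordinal.limitRecOn (motive := fun _ => Cl → Option X) θ f0
    (fun η fη c => fη ((σ η)⁻¹ c))
    (fun lam _ prev c => eventualVal lam (fun η h => prev η h c))

/-- A (transfinite) sequence of twists of length `len`, each of which satisfies the
predicate `B` (being a basic twist). -/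
structure TwistSeq (Cl : Type v) (B : Equiv.Perm Cl → Prop) : Type (v + 1) where
  len : Ordinal.{v}
  seq : Ordinal.{v} → Equiv.Perm Cl
  basic : ∀ η, η < len → B (seq η)

namespace TwistSeq

variable {Cl : Type v} {B : Equiv.Perm Cl → Prop}

/-- The terminal labelling obtained by applying a sequence of twists to `f0`. -/
noncomputable def terminal (s : TwistSeq Cl B) {X : Type u} (f0 : Cl → Option X) :
    Cl → Option X :=
  run s.seq f0 s.len

/-- A sequence of twists is convergent over `f0` if the terminal labelling is legal,
i.e. never takes the value `NaC = none`. -/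
def ConvOver (s : TwistSeq Cl B) {X : Type u} (f0 : Cl → Option X) : Prop :=
  ∀ c, s.terminal f0 c ≠ none

/-- A sequence of twists is universally convergent if it is convergent over the identity
labelling. -/
def UnivConv (s : TwistSeq Cl B) : Prop := s.ConvOver (fun c => some c)

/-- A sequence is twist-finite if each twist occurs in it only finitely many times. -/
def TwistFinite (s : TwistSeq Cl B) : Prop :=
  ∀ π : Equiv.Perm Cl, {η : Ordinal | η < s.len ∧ s.seq η = π}.Finite

/-- Two sequences are equivalent, `σ⃗ ∼ τ⃗`, when they produce the same terminal
configuration over every initial configuration. -/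
def Sim (s t : TwistSeq Cl B) : Prop :=
  ∀ f : Cl → Option Color, s.terminal f = t.terminal f

/-- Concatenation of twist sequences: `s.concat t` performs `s` and then `t`. -/
noncomputable def concat (s t : TwistSeq Cl B) : TwistSeq Cl B where
  len := s.len + t.len
  seq := fun η => if η < s.len then s.seq η else t.seq (η - s.len)
  basic := by
    intro η hη
    by_cases h : η < s.len
    · simpa [h] using s.basic η h
    · have hc : 0 < t.len := by
        rcases eq_zero_or_pos t.len with h0 | h0
        · rw [h0, add_zero] at hη; exact absurd hη h
        · exact h0
      have h2 : η - s.len < t.len := Ordinal.sub_lt_of_lt_add hη hc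
      simpa [h] using t.basic _ h2

/-- The empty sequence of twists. -/
def empty (Cl : Type v) (B : Equiv.Perm Cl → Prop) : TwistSeq Cl B where
  len := 0
  seq := fun _ => 1
  basic := fun η hη => absurd hη (by simp)

/-- `n`-fold self-concatenation of a sequence of twists. -/
noncomputable def npow (s : TwistSeq Cl B) : ℕ → TwistSeq Cl B
  | 0 => empty Cl B
  | n + 1 => (npow s n).concat s

end TwistSeq

/-- Basic sequences of twists of the edgeless cube `Q_L`. -/
abbrev BasicSeq (L : Type u) := TwistSeq (Cell L) (IsBasic L)

/-- Basic sequences of twists of the edged cube `Q̄_L`. -/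
abbrev EBasicSeq (L : Type u) := TwistSeq (ECell L) (IsEBasic L)

/-- `f` is accessible from `f0` when some basic sequence applied to `f0` is convergent with
terminal configuration `f`. -/
def Accessible {Cl : Type v} (B : Equiv.Perm Cl → Prop) (f0 f : Cl → Option Color) : Prop :=
  ∃ s : TwistSeq Cl B, s.ConvOver f0 ∧ s.terminal f0 = f

/-- A labelling is legal if it never takes the value `NaC = none`. -/
def IsLegal {Cl : Type v} {X : Type u} (f : Cl → Option X) : Prop := ∀ c, f c ≠ none

/-! ### Clusters, faces, and distinguished configurations -/

/-- The group of permutations of cells of the edgeless cube generated by the basic twists. -/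
def twistGroup (L : Type u) : Subgroup (Equiv.Perm (Cell L)) :=
  Subgroup.closure {π | IsBasic L π}

/-- The cluster of a cell of the edgeless cube: its orbit under the group generated by the
basic twists. -/
def cluster {L : Type u} (c : Cell L) : Set (Cell L) :=
  {d | ∃ g ∈ twistGroup L, g c = d}

/-- The group of permutations of cells of the edged cube generated by the basic twists. -/
def etwistGroup (L : Type u) : Subgroup (Equiv.Perm (ECell L)) :=
  Subgroup.closure {π | IsEBasic L π}

/-- The cluster of a cell of the edged cube. -/
def ecluster {L : Type u} (c : ECell L) : Set (ECell L) :=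
  {d | ∃ g ∈ etwistGroup L, g c = d}

open Classical in
/-- The solved configuration of the edgeless cube: each face gets one of six distinct
colors. -/
noncomputable def fSolved (L : Type u) : Cell L → Option Color := fun c =>
  if c.1.1 = ExtCoord.posInf then some .red
  else if c.1.1 = ExtCoord.negInf then some .orange
  else if c.1.2.1 = ExtCoord.posInf then some .blue
  else if c.1.2.1 = ExtCoord.negInf then some .green
  else if c.1.2.2 = ExtCoord.posInf then some .white
  else some .yellow

/-- The color of each face: the face is named by the axis and the sign (`true` = `+∞`). -/
def faceColor : Axis → Bool → Color
  | .x, true => .red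
  | .x, false => .orange
  | .y, true => .blue
  | .y, false => .green
  | .z, true => .white
  | .z, false => .yellow

open Classical in
/-- The solved configuration of the edged cube. -/
noncomputable def efSolved (L : Type u) : ECell L → Option Color := fun c =>
  if c.1.1.coord c.1.2 = ExtCoord.posInf then some (faceColor c.1.2 true)
  else some (faceColor c.1.2 false)

/-- A center cell of the edgeless cube: two of its coordinates are `0`. -/
def IsCenter {L : Type u} (c : Cell L) : Prop := zeroCount c.1 = 2

/-- The global rotation of the whole cube about an axis, as a permutation of the cells of
the edgeless cube. -/
def rotAllPerm {L : Type u} (i : Axis) : Equiv.Perm (Cell L) where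
  toFun c := ⟨rot i c.1, by rw [infCount_rot]; exact c.2⟩
  invFun c := ⟨rotInv i c.1, by rw [infCount_rotInv]; exact c.2⟩
  left_inv c := Subtype.ext (rotInv_rot i c.1)
  right_inv c := Subtype.ext (rot_rotInv i c.1)

/-- The group of global rotations of the edgeless cube. -/
def rotGroup (L : Type u) : Subgroup (Equiv.Perm (Cell L)) :=
  Subgroup.closure (Set.range (rotAllPerm (L := L)))

/-- A configuration of the edgeless cube is standard if every non-center cluster contains
exactly four cells of each of the six colors, and its restriction to the center cluster is
obtained from the solved configuration by a global rotation of the cube. -/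
def Standard {L : Type u} (f : Cell L → Option Color) : Prop :=
  (∀ c : Cell L, ¬IsCenter c → ∀ γ : Color, {d ∈ cluster c | f d = some γ}.ncard = 4) ∧
  ∃ g ∈ rotGroup L, ∀ d : Cell L, IsCenter d → f d = fSolved L (g⁻¹ d)

/-- A configuration is invariant under all quarter-turn face twists. -/
def FaceInvariant {L : Type u} (f : Cell L → Option Color) : Prop :=
  ∀ (i : Axis) (α : ExtCoord L), α.isInfB = true →
    ∀ c : Cell L, f ((quarterTurn i α)⁻¹ c) = f c

/-! ### Quadrants and cluster configurations -/

/-- The upper-right quadrant `D` of the Front face: the cells `(x, y, +∞)` with `x ∈ L`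
and `y ∈ {0} ∪ L`; every non-center cluster has a unique representative in `D`. -/
def Dset (L : Type u) : Set (Cell L) :=
  {c | ∃ (a : L) (b : ExtCoord L), (b = ExtCoord.zero ∨ ∃ r : L, b = ExtCoord.pos r) ∧
    c.1 = (ExtCoord.pos a, b, ExtCoord.posInf)}

/-- Two cells lie in the same face quadrant (an image of `D` under a global rotation). -/
def SameQuadrant {L : Type u} (d d' : Cell L) : Prop :=
  ∃ g ∈ rotGroup L, d ∈ (fun c => g c) '' Dset L ∧ d' ∈ (fun c => g c) '' Dset L

/-! ### Coupled cells of the edged cube -/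

/-- Two cells of the edged cube are coupled if they occupy the same location but belong to
different faces (they are parts of a common edge or corner cubie). -/
def Coupled {L : Type u} (c c' : ECell L) : Prop := c.1.1 = c'.1.1 ∧ c.1.2 ≠ c'.1.2

/-- An edge cell: exactly two infinite coordinates. -/
def IsEdgeCell {L : Type u} (c : ECell L) : Prop := infCount c.1.1 = 2

/-- A corner cell: three infinite coordinates. -/
def IsCornerCell {L : Type u} (c : ECell L) : Prop := infCount c.1.1 = 3

/-- An edge-cross cell: an edge cell one of whose coordinates is `0`. -/
def IsEdgeCross {L : Type u} (c : ECell L) : Prop :=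
  IsEdgeCell c ∧ 0 < zeroCount c.1.1

/-! ### Persistence of illegality

A twist moves a cell only by permuting its coordinates and reflecting some of them, so the set
of absolute values of the coordinates of a cell is invariant, and each such class of cells is
finite. Within the class of a `NaC` cell some `NaC` survives every successor step. At a limit
stage, if the whole finite class were coloured, every cell of it would have settled on its
colour before a common earlier stage, at which the class still contained a `NaC`. -/

section Run

variable {Cl : Type v} {X : Type u} (σ : Ordinal.{v} → Equiv.Perm Cl) (f0 : Cl → Option X)

theorem run_zero : run σ f0 0 = f0 :=
  Ordinal.limitRecOn_zero _ _ _

theorem run_add_one (η : Ordinal.{v}) :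
    run σ f0 (η + 1) = fun c => run σ f0 η ((σ η)⁻¹ c) :=
  Ordinal.limitRecOn_add_one _ _ _ _

theorem run_of_isSuccLimit {lam : Ordinal.{v}} (h : Order.IsSuccLimit lam) :
    run σ f0 lam = fun c => eventualVal lam (fun η _ => run σ f0 η c) :=
  Ordinal.limitRecOn_limit _ _ _ _ h

end Run

theorem exists_forall_ge_eq_some_of_eventualVal_ne_none {X : Type u} {lam : Ordinal.{v}}
    {g : ∀ η, η < lam → Option X} (h : eventualVal lam g ≠ none) :
    ∃ v : X, ∃ γ < lam, ∀ η (hη : η < lam), γ ≤ η → g η hη = some v := by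
  by_contra hc
  exact h (by simp [eventualVal, hc])

theorem exists_run_eq_none_of_mapsTo {Cl : Type v} {X : Type u}
    (σ : Ordinal.{v} → Equiv.Perm Cl) (f0 : Cl → Option X) (len : Ordinal.{v})
    {S : Set Cl} (hS : S.Finite) (hσ : ∀ η < len, Set.MapsTo (σ η) S S)
    (h0 : ∃ c ∈ S, f0 c = none) : ∀ θ ≤ len, ∃ c ∈ S, run σ f0 θ c = none := by
  intro θ
  induction θ using Ordinal.limitRecOn with
  | zero => exact fun _ => by simpa only [run_zero] using h0
  | add_one η IH =>
    intro hθ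
    have hη : η < len := (lt_add_one η).trans_le hθ
    obtain ⟨c, hcS, hc⟩ := IH hη.le
    exact ⟨σ η c, hσ η hη hcS, by simpa [run_add_one] using hc⟩
  | limit θ hlim IH =>
    intro hθ
    by_contra! hcolored
    have hsettled : ∀ c, ∃ γ < θ, c ∈ S → ∃ v : X, ∀ η < θ, γ ≤ η → run σ f0 η c = some v := by
      intro c
      by_cases hcS : c ∈ S
      · have hne := hcolored c hcS
        rw [run_of_isSuccLimit σ f0 hlim] at hne
        obtain ⟨v, γ, hγθ, hγ⟩ := exists_forall_ge_eq_some_of_eventualVal_ne_none hne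
        exact ⟨γ, hγθ, fun _ => ⟨v, hγ⟩⟩
      · exact ⟨0, hlim.bot_lt, fun h => absurd h hcS⟩
    choose γ hγθ hγ using hsettled
    set Γ := hS.toFinset.sup γ
    have hΓθ : Γ < θ := (Finset.sup_lt_iff hlim.bot_lt).2 fun c _ => hγθ c
    obtain ⟨c, hcS, hc⟩ := IH Γ hΓθ (hΓθ.le.trans hθ)
    obtain ⟨v, hv⟩ := hγ c hcS
    have hγΓ : γ c ≤ Γ := Finset.le_sup (hS.mem_toFinset.2 hcS)
    simp [hv Γ hΓθ hγΓ] at hc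

section Profile

variable {L : Type u}

def absVal : ExtCoord L → ExtCoord L
  | .neg r => .pos r
  | .zero => .zero
  | .pos r => .pos r
  | .negInf => .posInf
  | .posInf => .posInf

@[simp] theorem absVal_reflect (a : ExtCoord L) : absVal a.reflect = absVal a := by
  cases a <;> rfl

theorem absVal_preimage_singleton_subset (x : ExtCoord L) :
    absVal ⁻¹' {x} ⊆ {x, x.reflect} := by
  rintro a rfl
  cases a <;> simp [absVal, ExtCoord.reflect]

theorem finite_absVal_preimage {A : Set (ExtCoord L)} (hA : A.Finite) :
    (absVal ⁻¹' A).Finite :=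
  hA.preimage' fun x _ => (Set.toFinite {x, x.reflect}).subset (absVal_preimage_singleton_subset x)

def profile (p : Triple L) : Set (ExtCoord L) :=
  {absVal p.1, absVal p.2.1, absVal p.2.2}

theorem finite_profile (p : Triple L) : (profile p).Finite :=
  Set.toFinite {absVal p.1, absVal p.2.1, absVal p.2.2}

theorem profile_rot (i : Axis) (p : Triple L) : profile (rot i p) = profile p := by
  ext x
  cases i <;> simp only [profile, rot, absVal_reflect, Set.mem_insert_iff,
    Set.mem_singleton_iff] <;> tauto

theorem profile_rotInv (i : Axis) (p : Triple L) :
    profile (rotInv i p) = profile p := by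
  ext x
  cases i <;> simp only [profile, rotInv, absVal_reflect, Set.mem_insert_iff,
    Set.mem_singleton_iff] <;> tauto

theorem profile_qtTriple (i : Axis) (α : ExtCoord L) (p : Triple L) :
    profile (qtTriple i α p) = profile p := by
  unfold qtTriple; split_ifs <;> simp [profile_rot]

theorem profile_qtTripleInv (i : Axis) (α : ExtCoord L) (p : Triple L) :
    profile (qtTripleInv i α p) = profile p := by
  unfold qtTripleInv; split_ifs <;> simp [profile_rotInv]

theorem profile_apply_of_isBasic {π : Equiv.Perm (Cell L)} (hπ : IsBasic L π)
    (c : Cell L) : profile (π c).1 = profile c.1 := by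
  obtain ⟨i, α, rfl | rfl | rfl⟩ := hπ
  · exact profile_qtTriple i α c.1
  · rw [sq, Equiv.Perm.mul_apply]
    exact (profile_qtTriple i α _).trans (profile_qtTriple i α c.1)
  · exact profile_qtTripleInv i α c.1

theorem finite_setOf_profile_subset {A : Set (ExtCoord L)} (hA : A.Finite) :
    {c : Cell L | profile c.1 ⊆ A}.Finite := by
  have hA' := finite_absVal_preimage hA
  refine ((hA'.prod (hA'.prod hA')).preimage Subtype.val_injective.injOn).subset ?_
  rintro ⟨⟨a, b, c⟩, _⟩ h
  simp only [profile, Set.insert_subset_iff, Set.singleton_subset_iff] at h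
  exact ⟨h.1, h.2.1, h.2.2⟩

end Profile

end InfRubik
open InfRubik in
theorem illegality_persistent_general {L : Type u}
    (f0 : Cell L → Option Color) (hf0 : ∃ c, f0 c = none) :
    (∀ s : BasicSeq L, ∃ c, s.terminal f0 c = none) ∧
    (∀ g : Cell L → Option Color, IsLegal g → ¬ Accessible (IsBasic L) f0 g) := by
  obtain ⟨c0, hc0⟩ := hf0
  have persists (s : BasicSeq L) : ∃ c, s.terminal f0 c = none := by
    obtain ⟨c, -, hc⟩ := exists_run_eq_none_of_mapsTo s.seq f0 s.len
      (finite_setOf_profile_subset (finite_profile c0.1))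
      (fun η hη c hc => by simpa [profile_apply_of_isBasic (s.basic η hη)] using hc)
      ⟨c0, Set.Subset.rfl, hc0⟩ s.len le_rfl
    exact ⟨c, hc⟩
  refine ⟨persists, ?_⟩
  rintro g - ⟨s, hconv, -⟩
  obtain ⟨c, hc⟩ := persists s
  exact hconv c hc

open InfRubik in
/-- **Illegality is persistent** on the edgeless cube `Q_L`: if `f0` is an illegal
configuration then the terminal configuration obtained by applying any basic sequence to
`f0` is illegal; consequently, no legal configuration is accessible from an illegal one. -/
theorem illegality_persistent {L : Type u} [Infinite L]
    (f0 : Cell L → Option Color) (hf0 : ∃ c, f0 c = none) :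
    (∀ s : BasicSeq L, ∃ c, s.terminal f0 c = none) ∧
    (∀ g : Cell L → Option Color, IsLegal g → ¬ Accessible (IsBasic L) f0 g) :=
  illegality_persistent_general f0 hf0
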